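/- Let R be a Noetherian ring and I a nonzero prime ideal generated by a regular sequence. Then for every positive integer e, the ideal I^e is Ratliff–Rush, i.e., I^e = ∪_{n≥0} (I^{e(n+1)} : I^{en}). -/

import Mathlib

/-!
Write `I = (x₁, …, xₙ)` and let `b = xₙ`. A regular sequence is quasi-regular: a form of degree
`d` in the `xᵢ` lies in `I ^ (d + 1)` only if its coefficients lie in `I`. This is proved by
induction on `n`, writing a form as `G(x₁, …, xₙ₋₁) + xₙ H(x₁, …, xₙ)`. Since `b` is a
nonzerodivisor modulo `(x₁, …, xₙ₋₁)`, quasi-regularity gives `(I ^ (k + 1) : b) = I ^ k`, hence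
`(I ^ (m + j) : b ^ j) = I ^ m`. If `z I ^ (e n) ⊆ I ^ (e (n + 1))`, then in particular
`z b ^ (e n) ∈ I ^ (e + e n)`, so `z ∈ I ^ e`.
-/

open MvPolynomial

namespace MvPolynomial

variable {R ι : Type*} [CommRing R]

theorem IsHomogeneous.eval_mem_mul_pow {I J : Ideal R} {a : ι → R} (ha : ∀ i, a i ∈ I)
    {F : MvPolynomial ι R} {d : ℕ} (hF : F.IsHomogeneous d) (hJ : ∀ m, F.coeff m ∈ J) :
    F.eval a ∈ J * I ^ d := by
  rw [F.as_sum, map_sum]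
  refine Ideal.sum_mem _ fun m hm => ?_
  have hdeg : m.degree = d :=
    (Finsupp.degree_apply m).trans (hF.degree_eq_sum_deg_support hm).symm
  have hmono : eval a (monomial m 1) ∈ I ^ d :=
    Ideal.pow_right_mono (Ideal.span_le.2 (Set.range_subset_iff.2 ha)) d <|
      (Ideal.mem_span_pow_iff_exists_isHomogeneous a _).2
        ⟨monomial m 1, isHomogeneous_monomial 1 hdeg, rfl⟩
  rw [← mul_one (F.coeff m), ← C_mul_monomial, map_mul, eval_C]
  exact Ideal.mul_mem_mul (hJ m) hmono

theorem IsHomogeneous.of_X_mul {i : ι} {H : MvPolynomial ι R} {k : ℕ}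
    (h : (X i * H).IsHomogeneous (k + 1)) : H.IsHomogeneous k := by
  intro m hm
  have := h (show coeff (Finsupp.single i 1 + m) (X i * H) ≠ 0 by rwa [coeff_X_mul])
  rw [map_add, Finsupp.weight_single, Pi.one_apply, smul_eq_mul, mul_one] at this
  omega

theorem finSuccEquiv_rename_succ {n : ℕ} (G : MvPolynomial (Fin n) R) :
    finSuccEquiv R n (rename Fin.succ G) = Polynomial.C G := by
  induction G using MvPolynomial.induction_on with
  | C r => simp [finSuccEquiv_apply]
  | add p q hp hq => simp [hp, hq]
  | mul_X p i hp => simp [hp, finSuccEquiv_X_succ]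

theorem IsHomogeneous.exists_eq_rename_succ_add_X_zero_mul {n d : ℕ}
    {F : MvPolynomial (Fin (n + 1)) R} (hF : F.IsHomogeneous (d + 1)) :
    ∃ G H, F = rename Fin.succ G + X 0 * H ∧ G.IsHomogeneous (d + 1) ∧ H.IsHomogeneous d := by
  set p := finSuccEquiv R n F
  set G := p.coeff 0
  set H := (finSuccEquiv R n).symm p.divX
  have hFGH : F = rename Fin.succ G + X 0 * H := by
    apply (finSuccEquiv R n).injective
    rw [map_add, map_mul, finSuccEquiv_rename_succ, finSuccEquiv_X_zero,
      AlgEquiv.apply_symm_apply]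
    exact (Polynomial.X_mul_divX_add p).symm.trans (add_comm _ _)
  have hG : G.IsHomogeneous (d + 1) := hF.finSuccEquiv_coeff_isHomogeneous 0 (d + 1) (zero_add _)
  refine ⟨G, H, hFGH, hG, IsHomogeneous.of_X_mul (i := 0) ?_⟩
  rw [eq_sub_of_add_eq' hFGH.symm]
  exact hF.sub hG.rename_isHomogeneous

theorem IsHomogeneous.mem_map_C_of_eval_mem {I : Ideal R} {a : ι → R} {F : MvPolynomial ι R}
    (hF : F.IsHomogeneous 0) (h : F.eval a ∈ I) : F ∈ I.map C := by
  rw [totalDegree_eq_zero_iff_eq_C.1 ((totalDegree_zero_iff_isHomogeneous ι).2 hF)] at h ⊢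
  exact Ideal.mem_map_of_mem C (by rwa [eval_C] at h)

theorem rename_mem_map_C {κ : Type*} (f : ι → κ) {I : Ideal R} {p : MvPolynomial ι R}
    (hp : p ∈ I.map (C : R →+* MvPolynomial ι R)) :
    rename f p ∈ I.map (C : R →+* MvPolynomial κ R) := by
  rw [← Ideal.mk_ker (I := I), ← ker_map, RingHom.mem_ker] at hp ⊢
  rw [map_rename, hp, map_zero]

end MvPolynomial

namespace Ideal

variable {R : Type*} [CommRing R]

theorem sup_pow_succ_le (B J : Ideal R) (k : ℕ) :
    (B ⊔ J) ^ (k + 1) ≤ J ^ (k + 1) ⊔ B * (B ⊔ J) ^ k := by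
  induction k with
  | zero => simp [sup_comm]
  | succ k ih =>
    have hJ : J * (B ⊔ J) ^ (k + 1) ≤ J ^ (k + 2) ⊔ B * (B ⊔ J) ^ (k + 1) := calc
      J * (B ⊔ J) ^ (k + 1) ≤ J * (J ^ (k + 1) ⊔ B * (B ⊔ J) ^ k) := Ideal.mul_mono_right ih
      _ = J ^ (k + 2) ⊔ B * (J * (B ⊔ J) ^ k) := by
        rw [Ideal.mul_sup, ← pow_succ', mul_left_comm]
      _ ≤ J ^ (k + 2) ⊔ B * (B ⊔ J) ^ (k + 1) := by
        rw [pow_succ' (B ⊔ J)]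
        gcongr
        exact le_sup_right
    calc (B ⊔ J) ^ (k + 2) = B * (B ⊔ J) ^ (k + 1) ⊔ J * (B ⊔ J) ^ (k + 1) := by
          rw [pow_succ', Ideal.sup_mul]
      _ ≤ J ^ (k + 2) ⊔ B * (B ⊔ J) ^ (k + 1) := sup_le le_sup_right hJ

theorem ofList_le_ofList_cons (b : R) (l : List R) : ofList l ≤ ofList (b :: l) := by
  rw [ofList_cons]
  exact le_sup_right

theorem ofList_reverse (l : List R) : ofList l.reverse = ofList l := by
  simp [ofList]

theorem get_mem_ofList (rs : List R) (i : Fin rs.length) : rs.get i ∈ ofList rs :=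
  Ideal.subset_span (List.get_mem rs i)

theorem mem_ofList_pow_iff_exists_isHomogeneous {rs : List R} {d : ℕ} {x : R} :
    x ∈ ofList rs ^ d ↔
      ∃ F : MvPolynomial (Fin rs.length) R, F.IsHomogeneous d ∧ F.eval rs.get = x := by
  rw [← Ideal.mem_span_pow_iff_exists_isHomogeneous, Set.range_list_get]

end Ideal

namespace RingTheory.Sequence

variable {R : Type*} [CommRing R]

/-- Quasi-regularity of `rs`: the associated graded ring of `(rs)` is the polynomial ring over
`R ⧸ (rs)` in `rs.length` variables. -/
def IsQuasiRegular (rs : List R) : Prop :=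
  ∀ (d : ℕ) (F : MvPolynomial (Fin rs.length) R), F.IsHomogeneous d →
    F.eval rs.get ∈ Ideal.ofList rs ^ (d + 1) → F ∈ (Ideal.ofList rs).map C

theorem isQuasiRegular_nil : IsQuasiRegular ([] : List R) := fun d F _ hF =>
  (isHomogeneous_of_isEmpty (Fin 0) R F).mem_map_C_of_eval_mem (Ideal.pow_le_self d.succ_ne_zero hF)

namespace IsQuasiRegular

variable {b : R} {l : List R}

theorem mem_pow_of_mul_mem_pow (hl : IsQuasiRegular l)
    (hb : IsSMulRegular (R ⧸ Ideal.ofList l) b) {k : ℕ} {z : R} (hz : b * z ∈ Ideal.ofList l ^ k) : z ∈ Ideal.ofList l ^ k := by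
  induction k generalizing z with
  | zero => simp
  | succ k ih =>
    obtain ⟨F, hF, rfl⟩ :=
      Ideal.mem_ofList_pow_iff_exists_isHomogeneous.1 (ih (Ideal.pow_le_pow_right k.le_succ hz))
    have hbF : C b * F ∈ (Ideal.ofList l).map C :=
      hl k _ (hF.C_mul b) (by rwa [map_mul, eval_C])
    have hF_coeff (m) : F.coeff m ∈ Ideal.ofList l :=
      mem_of_isSMulRegular_quotient_of_smul_mem hb <| by
        simpa only [coeff_C_mul, smul_eq_mul] using mem_map_C_iff.1 hbF m
    rw [pow_succ']
    exact hF.eval_mem_mul_pow (Ideal.get_mem_ofList l) hF_coeff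

theorem mem_cons_pow_of_mul_mem_pow (hl : IsQuasiRegular l)
    (hb : IsSMulRegular (R ⧸ Ideal.ofList l) b) {k : ℕ} {z : R}
    (hz : b * z ∈ Ideal.ofList (b :: l) ^ (k + 1)) : z ∈ Ideal.ofList (b :: l) ^ k := by
  rw [Ideal.ofList_cons] at hz ⊢
  obtain ⟨u, hu, w, hw, huw⟩ := Submodule.mem_sup.1 (Ideal.sup_pow_succ_le _ _ k hz)
  obtain ⟨s, hs, rfl⟩ := Ideal.mem_span_singleton_mul.1 hw
  have hzs : z - s ∈ Ideal.ofList l ^ (k + 1) :=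
    hl.mem_pow_of_mul_mem_pow hb (by rwa [mul_sub, ← huw, add_sub_cancel_right])
  have hzs' : z - s ∈ (Ideal.span {b} ⊔ Ideal.ofList l) ^ k :=
    Ideal.pow_le_pow_right k.le_succ (Ideal.pow_right_mono le_sup_right _ hzs)
  simpa using add_mem hzs' hs

theorem mem_map_C_of_eval_mem_pow_sup (hl : IsQuasiRegular l)
    (hb : IsSMulRegular (R ⧸ Ideal.ofList l) b) {d : ℕ} {G : MvPolynomial (Fin l.length) R}
    (hG : G.IsHomogeneous d) (h : G.eval l.get ∈ Ideal.ofList l ^ (d + 1) ⊔ Ideal.span {b}) :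
    G ∈ (Ideal.ofList (b :: l)).map C := by
  -- Write `G(l) = u + t b`; then `t = P(l)` for a form `P` of degree `d`, and `G - b P` has value
  -- `u ∈ (l) ^ (d + 1)`.
  obtain ⟨u, hu, w, hw, huw⟩ := Submodule.mem_sup.1 h
  obtain ⟨t, rfl⟩ := Ideal.mem_span_singleton'.1 hw
  have ht : t ∈ Ideal.ofList l ^ d := by
    refine hl.mem_pow_of_mul_mem_pow hb ?_
    rw [mul_comm, eq_sub_of_add_eq' huw]
    have hGd : G.eval l.get ∈ Ideal.ofList l ^ d := by
      simpa only [Ideal.top_mul] using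
        hG.eval_mem_mul_pow (J := ⊤) (Ideal.get_mem_ofList l) fun _ => Submodule.mem_top
    exact sub_mem hGd (Ideal.pow_le_pow_right d.le_succ hu)
  obtain ⟨P, hP, rfl⟩ := Ideal.mem_ofList_pow_iff_exists_isHomogeneous.1 ht
  have hGP : G - C b * P ∈ (Ideal.ofList l).map C := by
    refine hl d _ (hG.sub (hP.C_mul b)) ?_
    rwa [map_sub, map_mul, eval_C, mul_comm, ← huw, add_sub_cancel_right]
  have hbP : C b * P ∈ (Ideal.ofList (b :: l)).map C :=
    Ideal.mul_mem_right _ _ (Ideal.mem_map_of_mem C (Ideal.subset_span List.mem_cons_self))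
  have hGP' := Ideal.map_mono (f := C) (Ideal.ofList_le_ofList_cons b l) hGP
  simpa only [sub_add_cancel] using add_mem hGP' hbP

theorem cons (hl : IsQuasiRegular l) (hb : IsSMulRegular (R ⧸ Ideal.ofList l) b) :
    IsQuasiRegular (b :: l) := by
  intro d
  induction d with
  | zero => exact fun F hF hFe => hF.mem_map_C_of_eval_mem (Ideal.pow_le_self one_ne_zero hFe)
  | succ d ih =>
    intro F hF hFe
    obtain ⟨G, H, rfl, hG, hH⟩ := hF.exists_eq_rename_succ_add_X_zero_mul
    have heval : (rename Fin.succ G + X 0 * H).eval (b :: l).get =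
        G.eval l.get + b * H.eval (b :: l).get := by
      rw [map_add, map_mul, eval_rename, eval_X]
      rfl
    rw [heval] at hFe
    have hGI : G ∈ (Ideal.ofList (b :: l)).map C := by
      refine hl.mem_map_C_of_eval_mem_pow_sup hb hG ?_
      have h := Ideal.sup_pow_succ_le _ _ (d + 1) (Ideal.ofList_cons b l ▸ hFe)
      have h' := (sup_le_sup_left Ideal.mul_le_left _ :
        _ ≤ Ideal.ofList l ^ (d + 2) ⊔ Ideal.span {b}) h
      have hbH : b * H.eval (b :: l).get ∈ Ideal.ofList l ^ (d + 2) ⊔ Ideal.span {b} :=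
        Ideal.mul_mem_right _ _ (Submodule.mem_sup_right (Ideal.mem_span_singleton_self b))
      simpa using sub_mem h' hbH
    have hGe : G.eval l.get ∈ Ideal.ofList (b :: l) ^ (d + 2) := by
      rw [pow_succ']
      exact hG.eval_mem_mul_pow
        (fun i => Ideal.ofList_le_ofList_cons b l (Ideal.get_mem_ofList l i)) (mem_map_C_iff.1 hGI)
    have hHe : H.eval (b :: l).get ∈ Ideal.ofList (b :: l) ^ (d + 1) :=
      hl.mem_cons_pow_of_mul_mem_pow hb (by simpa using sub_mem hFe hGe)
    exact add_mem (rename_mem_map_C _ hGI) (Ideal.mul_mem_left _ _ (ih H hH hHe))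

end IsQuasiRegular

theorem isWeaklyRegular_append_singleton_iff (l : List R) (b : R) :
    IsWeaklyRegular R (l ++ [b]) ↔
      IsWeaklyRegular R l ∧ IsSMulRegular (R ⧸ Ideal.ofList l) b := by
  have h : (Ideal.ofList l • ⊤ : Submodule R R) = Ideal.ofList l := by
    rw [Ideal.smul_eq_mul, Ideal.mul_top]
  rw [isWeaklyRegular_append_iff, isWeaklyRegular_singleton_iff, h]

theorem IsWeaklyRegular.isQuasiRegular_reverse {l : List R} (h : IsWeaklyRegular R l) :
    IsQuasiRegular l.reverse := by
  induction l using List.reverseRecOn with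
  | nil => exact isQuasiRegular_nil
  | append_singleton l b ih =>
    obtain ⟨hl, hb⟩ := (isWeaklyRegular_append_singleton_iff l b).1 h
    rw [List.reverse_append, List.reverse_singleton, List.singleton_append]
    exact (ih hl).cons (by rwa [Ideal.ofList_reverse])

theorem IsWeaklyRegular.mem_pow_of_mul_pow_mem_pow {l : List R} {b : R}
    (h : IsWeaklyRegular R (l ++ [b])) {m j : ℕ} {z : R}
    (hz : z * b ^ j ∈ Ideal.ofList (l ++ [b]) ^ (m + j)) : z ∈ Ideal.ofList (l ++ [b]) ^ m := by
  obtain ⟨hl, hb⟩ := (isWeaklyRegular_append_singleton_iff l b).1 h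
  rw [← Ideal.ofList_reverse] at hb
  have hI : Ideal.ofList (l ++ [b]) = Ideal.ofList (b :: l.reverse) := by
    rw [← Ideal.ofList_reverse, List.reverse_append, List.reverse_singleton, List.singleton_append]
  rw [hI] at hz ⊢
  induction j with
  | zero => simpa using hz
  | succ j ih =>
    refine ih (hl.isQuasiRegular_reverse.mem_cons_pow_of_mul_mem_pow hb ?_)
    rwa [mul_left_comm, ← pow_succ']

end RingTheory.Sequence

namespace Ideal

variable {R : Type*} [CommRing R]

def ratliffRush (J : Ideal R) : Ideal R :=
  ⨆ n : ℕ, (J ^ (n + 1)).colon ((J ^ n : Ideal R) : Set R)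

theorem le_ratliffRush (J : Ideal R) : J ≤ J.ratliffRush :=
  le_iSup_of_le 0 fun x hx => Submodule.mem_colon.2 fun p _ => by
    simpa using J.mul_mem_right p hx

theorem ratliffRush_le_of_mul_pow_mem {J : Ideal R} {c : R} (hc : c ∈ J)
    (h : ∀ (n : ℕ) (z : R), z * c ^ n ∈ J ^ (n + 1) → z ∈ J) : J.ratliffRush ≤ J :=
  iSup_le fun n z hz => h n z (Submodule.mem_colon.1 hz _ (pow_mem_pow hc n))

end Ideal

theorem stmt3_general {R : Type*} [CommRing R]
    (I : Ideal R) (hne : I ≠ ⊥)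
    (as : List R) (hreg : RingTheory.Sequence.IsRegular R as) (hI : I = Ideal.ofList as)
    (e : ℕ) :
    I ^ e = ⨆ n : ℕ, (I ^ (e * (n + 1))).colon ((I ^ (e * n) : Ideal R) : Set R) := by
  subst hI
  obtain rfl | ⟨l, b, rfl⟩ := as.eq_nil_or_concat'
  · exact absurd Ideal.ofList_nil hne
  have hb : b ∈ Ideal.ofList (l ++ [b]) := Ideal.subset_span (by simp)
  simp_rw [pow_mul]
  refine le_antisymm (Ideal.le_ratliffRush _)
    (Ideal.ratliffRush_le_of_mul_pow_mem (Ideal.pow_mem_pow hb e) fun n z hz => ?_)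
  refine hreg.toIsWeaklyRegular.mem_pow_of_mul_pow_mem_pow (j := e * n) ?_
  rwa [← pow_mul, ← pow_mul, mul_add_one, add_comm] at hz

theorem stmt3 {R : Type*} [CommRing R] [IsNoetherianRing R]
    (I : Ideal R) (hprime : I.IsPrime) (hne : I ≠ ⊥)
    (as : List R) (hreg : RingTheory.Sequence.IsRegular R as) (hI : I = Ideal.ofList as)
    (e : ℕ) (he : 0 < e) :
    I ^ e = ⨆ n : ℕ, (I ^ (e * (n + 1))).colon ((I ^ (e * n) : Ideal R) : Set R) :=
  stmt3_general I hne as hreg hI e
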